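/- Any lattice polytope of degree 0 or 1 is normal. -/

import Mathlib

open Finset Pointwise

noncomputable section

/-- Lattice points: `ZL N = ℤ^N`. -/
abbrev ZL (N : ℕ) := Fin N → ℤ

/-- Embedding of the lattice into `ℝ^N`. -/
def toR {N : ℕ} (x : ZL N) : Fin N → ℝ := fun i => (x i : ℝ)

/-- The lattice polytope spanned by a finite set `V` of lattice points. -/
def poly {N : ℕ} (V : Finset (ZL N)) : Set (Fin N → ℝ) :=
  convexHull ℝ (toR '' (V : Set (ZL N)))

/-- The lattice points of the dilate `k • P`. -/
def latPts {N : ℕ} (V : Finset (ZL N)) (k : ℕ) : Set (ZL N) :=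
  {x | toR x ∈ (k : ℝ) • poly V}

/-- `P` is `k`-normal: every lattice point of `kP` is a sum of `k` lattice points of `P`. -/
def kNormal {N : ℕ} (V : Finset (ZL N)) (k : ℕ) : Prop :=
  ∀ x ∈ latPts V k, ∃ f : Fin k → ZL N, (∀ i, f i ∈ latPts V 1) ∧ ∑ i, f i = x

/-- `P` is normal. -/
def NormalPoly {N : ℕ} (V : Finset (ZL N)) : Prop := ∀ k, 1 ≤ k → kNormal V k

/-- The set of which `d_P` is the least element. -/
def dSet {N : ℕ} (V : Finset (ZL N)) : Set ℕ :=
  {n | 0 < n ∧ ∀ k ≥ n, latPts V (k + 1) = latPts V 1 + latPts V k}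

/-- The set of which the `k`-normality threshold `k_P` is the least element. -/
def kSet {N : ℕ} (V : Finset (ZL N)) : Set ℕ :=
  {K | 0 < K ∧ ∀ k ≥ K, kNormal V k}

/-- The set of which `ν_P` is the least element. -/
def nuSet {N : ℕ} (V : Finset (ZL N)) : Set ℕ :=
  {n | 0 < n ∧ ∀ k ≥ n, latPts V (k + 1) = (V : Set (ZL N)) + latPts V k}

/-- `v` is a vertex of `P`. -/
def IsVertex {N : ℕ} (V : Finset (ZL N)) (v : ZL N) : Prop :=
  v ∈ V ∧ toR v ∈ Set.extremePoints ℝ (poly V)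

/-- `P` is very ample: for every vertex `v`, every lattice point of the cone
`ℝ_{≥0}(P - v)` is a finite sum of elements `w - v` with `w ∈ P ∩ M`. -/
def VeryAmple {N : ℕ} (V : Finset (ZL N)) : Prop :=
  ∀ v, IsVertex V v → ∀ u : ZL N,
    (∃ c : ℝ, 0 ≤ c ∧ ∃ p ∈ poly V, toR u = c • (p - toR v)) →
    ∃ (m : ℕ) (w : Fin m → ZL N), (∀ i, w i ∈ latPts V 1) ∧ u = ∑ i, (w i - v)

/-- The set of numbers `m` such that `x - d_P v` is a sum of `m` elements of `(P ∩ M) - v`;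
`σ(x, d_P v)` is its least element. -/
def sigmaSet {N : ℕ} (V : Finset (ZL N)) (dP : ℕ) (x v : ZL N) : Set ℕ :=
  {m | ∃ w : Fin m → ZL N, (∀ i, w i ∈ latPts V 1) ∧ x - dP • v = ∑ i, (w i - v)}

/-- The set of all values `σ(x, d_P v)`; `m_P` is its greatest element. -/
def mSet {N : ℕ} (V : Finset (ZL N)) (dP : ℕ) : Set ℕ :=
  {s | ∃ x ∈ latPts V dP, ∃ v, IsVertex V v ∧ IsLeast (sigmaSet V dP x v) s}

end

/-!
If a lattice point `x ∈ mP` with `m ≥ 2` is written by Carathéodory as `∑ aᵢ zᵢ` with affinely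
independent vertices `zᵢ` and `aᵢ > 0`, and some `aᵢ ≥ 1`, then `x - zᵢ ∈ (m - 1)P` and induction on
`m` finishes. Otherwise all `aᵢ < 1`, so the simplex has `n > m` vertices, and either `x` itself
(if `m ≤ n - 2`) or `∑ zᵢ - x` (if `m = n - 1`, total weight `1`) is a lattice point with positive
weights of total `h ≤ n - 2`. Completing the `zᵢ` to an affine basis of `aff P` by `d + 1 - n`
vertices of weight `1` gives a lattice point in the relative interior of `kP`,
`k = h + d + 1 - n ≤ d - 1`, which the degree hypothesis forbids.
-/

open Set Module

theorem intrinsicInterior_smul {E : Type*} [NormedAddCommGroup E] [NormedSpace ℝ E]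
    [FiniteDimensional ℝ E] {c : ℝ} (hc : c ≠ 0) (s : Set E) :
    intrinsicInterior ℝ (c • s) = c • intrinsicInterior ℝ s := by
  rw [← Set.image_smul, ← Set.image_smul]
  exact (LinearEquiv.smulOfNeZero ℝ E c hc).toAffineEquiv.intrinsicInterior_image s

theorem sum_smul_mem_smul_convexHull {E ι : Type*} [AddCommGroup E] [Module ℝ E]
    [Fintype ι] {s : Set E} {p : ι → E} (hp : ∀ i, p i ∈ s) {a : ι → ℝ} (ha : ∀ i, 0 ≤ a i)
    (hpos : 0 < ∑ i, a i) : ∑ i, a i • p i ∈ (∑ i, a i) • convexHull ℝ s :=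
  mem_smul_set.2 ⟨univ.centerMass a p,
    univ.centerMass_mem_convexHull (fun i _ => ha i) hpos (fun i _ => hp i),
    smul_inv_smul₀ hpos.ne' _⟩

theorem exists_finset_affineSpan_union_eq {k V P : Type*} [DivisionRing k] [AddCommGroup V]
    [Module k V] [AddTorsor V P] [FiniteDimensional k V] {C X : Set P} (hCX : C ⊆ X)
    (hC : C.Nonempty) :
    ∃ F : Finset P, ↑F ⊆ X ∧ #F + finrank k (vectorSpan k C) ≤ finrank k (vectorSpan k X) ∧
      affineSpan k (C ∪ F) = affineSpan k X := by
  classical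
  have hle : finrank k (vectorSpan k C) ≤ finrank k (vectorSpan k X) :=
    Submodule.finrank_mono (vectorSpan_mono k hCX)
  by_cases heq : affineSpan k C = affineSpan k X
  · exact ⟨∅, by simp, by simpa using hle, by simpa using heq⟩
  obtain ⟨v, hvX, hv⟩ : ∃ v ∈ X, v ∉ affineSpan k C := by
    by_contra! h
    exact heq (le_antisymm (affineSpan_mono k hCX) (affineSpan_le.2 h))
  have hlt : finrank k (vectorSpan k C) < finrank k (vectorSpan k (insert v C)) := by
    have hspan : affineSpan k C < affineSpan k (insert v C) :=
      (affineSpan_mono k (subset_insert v C)).lt_of_ne fun h =>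
        hv (h ▸ mem_affineSpan k (mem_insert v C))
    have := AffineSubspace.direction_lt_of_nonempty hspan ((affineSpan_nonempty k).2 hC)
    rw [direction_affineSpan, direction_affineSpan] at this
    exact Submodule.finrank_lt_finrank_of_lt this
  obtain ⟨F, hFX, hFcard, hFspan⟩ :=
    exists_finset_affineSpan_union_eq (k := k) (insert_subset hvX hCX) (insert_nonempty v C)
  refine ⟨insert v F, ?_, ?_, ?_⟩
  · simpa using insert_subset hvX hFX
  · have := card_insert_le v F
    omega
  · rwa [coe_insert, Set.union_insert, ← Set.insert_union]
termination_by finrank k (vectorSpan k X) - finrank k (vectorSpan k C)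
decreasing_by
  have := Submodule.finrank_mono (vectorSpan_mono k (insert_subset hvX hCX))
  omega

theorem AffineIndependent.centerMass_mem_intrinsicInterior {E ι : Type*} [NormedAddCommGroup E]
    [NormedSpace ℝ E] [FiniteDimensional ℝ E] [Fintype ι] [Nonempty ι] {s : Set E}
    (hs : Convex ℝ s) {z : ι → E} (hz : AffineIndependent ℝ z) (hzs : range z ⊆ s)
    (hspan : affineSpan ℝ (range z) = affineSpan ℝ s) {w : ι → ℝ} (hw : ∀ i, 0 < w i) :
    univ.centerMass w z ∈ intrinsicInterior ℝ s := by
  rw [intrinsicInterior, ← hspan]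
  -- `z` is an affine basis of `A`, and `s` contains the open subset of `A` where all its
  -- barycentric coordinates are positive
  set A := affineSpan ℝ (range z)
  let b : AffineBasis ι ℝ A :=
    ⟨fun i => ⟨z i, mem_affineSpan ℝ (mem_range_self i)⟩, hz.of_comp A.subtype, by
      convert affineSpan_coe_preimage_eq_top (k := ℝ) (range z)
      ext; simp [Subtype.ext_iff]⟩
  have hcoe : ∀ v : ι → ℝ, ∑ i, v i = 1 →
      ((univ.affineCombination ℝ b v : A) : E) = univ.centerMass v z := fun v hv => by
    rw [← A.subtype_apply, univ.map_affineCombination _ _ hv, affineCombination_eq_centerMass hv]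
    rfl
  have hW : 0 < ∑ i, w i := univ.sum_pos (fun i _ => hw i) univ_nonempty
  have hw1 : ∑ i, w i / ∑ j, w j = 1 := by rw [← Finset.sum_div, div_self hW.ne']
  have hc : univ.centerMass (fun i => w i / ∑ j, w j) z = univ.centerMass w z := by
    simp only [div_eq_inv_mul]
    exact Finset.centerMass_smul_left univ (w := w) (z := z) (inv_ne_zero hW.ne')
  refine ⟨_, interior_maximal (t := {u | ∀ i, 0 < b.coord i u}) ?_ ?_ ?_, (hcoe _ hw1).trans hc⟩
  · intro u hu
    have hu1 := b.sum_coord_apply_eq_one u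
    have hu' := hcoe _ hu1
    rw [b.affineCombination_coord_eq_self] at hu'
    rw [Set.mem_preimage, hu']
    exact convexHull_min hzs hs
      (univ.centerMass_mem_convexHull (fun i _ => (hu i).le) (by simp [hu1]) (by simp))
  · simp only [ofPred_forall]
    exact isOpen_iInter_of_finite fun i =>
      isOpen_lt continuous_const (b.coord i).continuous_of_finiteDimensional
  · intro i
    rw [b.coord_apply_combination_of_mem (mem_univ i) hw1]
    exact div_pos (hw i) hW

section Lattice

variable {N : ℕ}

theorem toR_add (x y : ZL N) : toR (x + y) = toR x + toR y := by
  funext i; simp [toR]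

theorem toR_sub (x y : ZL N) : toR (x - y) = toR x - toR y := by
  funext i; simp [toR]

theorem toR_sum {ι : Type*} (s : Finset ι) (x : ι → ZL N) :
    toR (∑ i ∈ s, x i) = ∑ i ∈ s, toR (x i) := by
  funext j; simp [toR]

variable (V : Finset (ZL N))

theorem affineSpan_poly : affineSpan ℝ (poly V) = affineSpan ℝ (toR '' (V : Set (ZL N))) :=
  affineSpan_convexHull _

theorem finrank_vectorSpan_poly :
    finrank ℝ (vectorSpan ℝ (poly V)) = finrank ℝ (vectorSpan ℝ (toR '' (V : Set (ZL N)))) := by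
  rw [← direction_affineSpan, affineSpan_poly, direction_affineSpan]

variable {V}

theorem mem_latPts_one {v : ZL N} (hv : v ∈ V) : v ∈ latPts V 1 := by
  simpa [latPts, poly] using subset_convexHull ℝ _ (Set.mem_image_of_mem toR hv)

theorem sum_smul_mem_latPts {ι : Type*} [Fintype ι] {z : ι → ZL N} (hz : ∀ i, z i ∈ V)
    {a : ι → ℝ} (ha : ∀ i, 0 ≤ a i) {m : ℕ} (hm : 0 < m) (hsum : ∑ i, a i = m) {x : ZL N}
    (hx : ∑ i, a i • toR (z i) = toR x) : x ∈ latPts V m := by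
  have := sum_smul_mem_smul_convexHull (s := toR '' (V : Set (ZL N)))
    (fun i => Set.mem_image_of_mem toR (hz i)) ha (by rw [hsum]; exact_mod_cast hm)
  rwa [hsum, hx] at this

theorem exists_affineIndependent_pos_combination {m : ℕ} (hm : 0 < m) {x : ZL N}
    (hx : x ∈ latPts V m) :
    ∃ (ι : Type) (_ : Fintype ι) (z : ι → ZL N) (a : ι → ℝ), (∀ i, z i ∈ V) ∧
      AffineIndependent ℝ (toR ∘ z) ∧ (∀ i, 0 < a i) ∧ ∑ i, a i = m ∧
      ∑ i, a i • toR (z i) = toR x := by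
  obtain ⟨p, hp, hxp⟩ := mem_smul_set.1 hx
  obtain ⟨ι, _, q, w, hqV, hq, hw, hw1, rfl⟩ := eq_pos_convex_span_of_mem_convexHull hp
  choose z hzV hzq using fun i => hqV (mem_range_self i)
  obtain rfl : toR ∘ z = q := funext hzq
  refine ⟨ι, inferInstance, z, fun i => m * w i, hzV, hq,
    fun i => mul_pos (by exact_mod_cast hm) (hw i), ?_, ?_⟩
  · rw [← Finset.mul_sum, hw1, mul_one]
  · simp only [← hxp, Finset.smul_sum, mul_smul, Function.comp_apply]

theorem sub_mem_latPts_of_one_le {ι : Type*} [Fintype ι] [DecidableEq ι] {z : ι → ZL N}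
    (hz : ∀ i, z i ∈ V) {a : ι → ℝ} (ha : ∀ i, 0 ≤ a i) {m : ℕ} (hm : 0 < m)
    (hsum : ∑ i, a i = m + 1) {x : ZL N} (hx : ∑ i, a i • toR (z i) = toR x) {j : ι}
    (hj : 1 ≤ a j) : x - z j ∈ latPts V m := by
  refine sum_smul_mem_latPts hz (a := a - Pi.single j 1) (fun i => ?_) hm ?_ ?_
  · by_cases hij : i = j
    · subst hij; simpa using hj
    · simpa [hij] using ha i
  · simp [Finset.sum_sub_distrib, hsum]
  · simp [sub_smul, Finset.sum_sub_distrib, hx, toR_sub]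

theorem kNormal_one (V : Finset (ZL N)) : kNormal V 1 :=
  fun x hx => ⟨fun _ => x, fun _ => hx, by simp⟩

theorem kNormal.succ {m : ℕ} (hm : kNormal V m)
    (hstep : ∀ x ∈ latPts V (m + 1), ∃ v ∈ V, x - v ∈ latPts V m) : kNormal V (m + 1) := by
  intro x hx
  obtain ⟨v, hv, hxv⟩ := hstep x hx
  obtain ⟨f, hf, hfsum⟩ := hm _ hxv
  exact ⟨Fin.cons v f, Fin.cases (mem_latPts_one hv) hf, by rw [Fin.sum_cons, hfsum]; abel⟩

theorem exists_lattice_pos_combination_of_lt_one {ι : Type*} [Fintype ι] {z : ι → ZL N}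
    {a : ι → ℝ} (ha0 : ∀ i, 0 < a i) (ha1 : ∀ i, a i < 1) {m : ℕ} (hm : 2 ≤ m) (hsum : ∑ i, a i = m)
    {x : ZL N} (hx : ∑ i, a i • toR (z i) = toR x) :
    ∃ (y : ZL N) (b : ι → ℝ) (h : ℕ), (∀ i, 0 < b i) ∧ ∑ i, b i = h ∧ 1 ≤ h ∧
      h + 2 ≤ Fintype.card ι ∧ ∑ i, b i • toR (z i) = toR y := by
  have hne : (univ : Finset ι).Nonempty := by
    by_contra h
    rw [Finset.not_nonempty_iff_eq_empty.1 h, sum_empty] at hsum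
    norm_cast at hsum
    omega
  have hcard : m < Fintype.card ι := by
    have : (m : ℝ) < Fintype.card ι := by
      simpa [← hsum] using sum_lt_sum_of_nonempty hne fun i _ => ha1 i
    exact_mod_cast this
  rcases (show m + 2 ≤ Fintype.card ι ∨ Fintype.card ι = m + 1 by omega) with hlt | heq
  · exact ⟨x, a, m, ha0, hsum, by omega, hlt, hx⟩
  · refine ⟨∑ i, z i - x, 1 - a, 1, fun i => sub_pos.2 (ha1 i), ?_, le_rfl, by omega, ?_⟩
    · simp [sum_sub_distrib, hsum, heq]
    · simp [sub_smul, sum_sub_distrib, hx, toR_sub, toR_sum]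

theorem sum_smul_mem_intrinsicInterior {κ : Type*} [Fintype κ] [Nonempty κ] {p : κ → ZL N}
    (hpV : ∀ j, p j ∈ V) (hp : AffineIndependent ℝ (toR ∘ p))
    (hspan : affineSpan ℝ (range (toR ∘ p)) = affineSpan ℝ (toR '' (V : Set (ZL N))))
    {c : κ → ℝ} (hc : ∀ j, 0 < c j) :
    ∑ j, c j • toR (p j) ∈ intrinsicInterior ℝ ((∑ j, c j) • poly V) := by
  have hpos : 0 < ∑ j, c j := sum_pos (fun j _ => hc j) univ_nonempty
  rw [intrinsicInterior_smul hpos.ne']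
  refine mem_smul_set.2 ⟨univ.centerMass c (toR ∘ p), ?_, smul_inv_smul₀ hpos.ne' _⟩
  refine hp.centerMass_mem_intrinsicInterior (convex_convexHull ℝ _) ?_
    (hspan.trans (affineSpan_poly V).symm) hc
  rintro _ ⟨j, rfl⟩
  exact subset_convexHull ℝ _ (Set.mem_image_of_mem toR (hpV j))

theorem exists_latticePoint_mem_intrinsicInterior {ι : Type*} [Fintype ι] {z : ι → ZL N}
    (hzV : ∀ i, z i ∈ V) (hz : AffineIndependent ℝ (toR ∘ z)) {b : ι → ℝ} (hb : ∀ i, 0 < b i)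
    {h : ℕ} (hbsum : ∑ i, b i = h) (hh1 : 1 ≤ h) (hh : h + 2 ≤ Fintype.card ι) {y : ZL N}
    (hy : ∑ i, b i • toR (z i) = toR y) :
    ∃ k : ℕ, 1 ≤ k ∧ k ≤ finrank ℝ (vectorSpan ℝ (poly V)) - 1 ∧
      ∃ q : ZL N, toR q ∈ intrinsicInterior ℝ ((k : ℝ) • poly V) := by
  have : Nonempty ι := Fintype.card_pos_iff.1 (by omega)
  obtain ⟨F, hFV, hFcard, hFspan⟩ :=
    exists_finset_affineSpan_union_eq (k := ℝ) (C := range (toR ∘ z))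
    (range_subset_iff.2 fun i => Set.mem_image_of_mem toR (hzV i)) (range_nonempty (toR ∘ z))
  rw [hz.finrank_vectorSpan (n := Fintype.card ι - 1) (by omega)] at hFcard
  choose g hgV hgF using fun f : F => hFV f.2
  simp only [Finset.mem_coe] at hgV
  set p : ι ⊕ F → ZL N := Sum.elim z g
  have hrange : range (toR ∘ p) = range (toR ∘ z) ∪ F := by
    rw [Sum.comp_elim, Set.Sum.elim_range, show toR ∘ g = (↑) from funext hgF, Subtype.range_coe]
  have hpspan : affineSpan ℝ (range (toR ∘ p)) = affineSpan ℝ (toR '' (V : Set (ZL N))) := by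
    rw [hrange, hFspan]
  -- at most `d + 1` points spanning a `d`-dimensional space are affinely independent
  have hp : AffineIndependent ℝ (toR ∘ p) := by
    rw [affineIndependent_iff_le_finrank_vectorSpan _ _ (n := Fintype.card ι - 1 + #F)
      (by rw [Fintype.card_sum, Fintype.card_coe]; omega), ← direction_affineSpan, hpspan,
      direction_affineSpan]
    omega
  have hint := sum_smul_mem_intrinsicInterior (fun j => by cases j <;> simp [p, hzV, hgV]) hp
    hpspan (c := Sum.elim b 1) (by rintro (i | f) <;> simp [hb])
  have hcsum : ∑ j, Sum.elim b (1 : F → ℝ) j = ((h + #F : ℕ) : ℝ) := by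
    simp [Fintype.sum_sum_type, hbsum]
  have hq : ∑ j, Sum.elim b (1 : F → ℝ) j • toR (p j) = toR (y + ∑ f, g f) := by
    simp [Fintype.sum_sum_type, p, hy, toR_add, toR_sum, hgF]
  rw [hcsum, hq] at hint
  refine ⟨h + #F, by omega, ?_, _, hint⟩
  rw [finrank_vectorSpan_poly]
  omega

theorem exists_sub_mem_latPts
    (hdeg : ∀ k : ℕ, 1 ≤ k → k ≤ finrank ℝ (vectorSpan ℝ (poly V)) - 1 →
      ∀ x : ZL N, toR x ∉ intrinsicInterior ℝ ((k : ℝ) • poly V))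
    {m : ℕ} (hm : 0 < m) {x : ZL N} (hx : x ∈ latPts V (m + 1)) :
    ∃ v ∈ V, x - v ∈ latPts V m := by
  classical
  obtain ⟨ι, _, z, a, hzV, hz, ha, hsum, hxz⟩ :=
    exists_affineIndependent_pos_combination m.succ_pos hx
  by_cases hbig : ∃ j, 1 ≤ a j
  · obtain ⟨j, hj⟩ := hbig
    exact ⟨z j, hzV j, sub_mem_latPts_of_one_le hzV (fun i => (ha i).le) hm
      (by exact_mod_cast hsum) hxz hj⟩
  · simp only [not_exists, not_le] at hbig
    obtain ⟨y, b, h, hb, hbsum, hh1, hh, hy⟩ :=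
      exists_lattice_pos_combination_of_lt_one ha hbig (by omega) hsum hxz
    obtain ⟨k, hk1, hkd, q, hq⟩ :=
      exists_latticePoint_mem_intrinsicInterior hzV hz hb hbsum hh1 hh hy
    exact (hdeg k hk1 hkd q hq).elim

end Lattice

/-- Any lattice polytope of degree `0` or `1` is normal.  Here
`deg P ≤ 1` is expressed by its defining property: `kP` has no interior (relative
interior) lattice points for all `1 ≤ k ≤ dim P − 1`. -/
theorem stmt18 {N : ℕ} (V : Finset (ZL N))
    (hdeg : ∀ k : ℕ, 1 ≤ k →
      k ≤ Module.finrank ℝ ↥(vectorSpan ℝ (poly V)) - 1 →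
      ∀ x : ZL N, toR x ∉ intrinsicInterior ℝ ((k : ℝ) • poly V)) :
    NormalPoly V := by
  intro k hk
  induction k, hk using Nat.le_induction with
  | base => exact kNormal_one V
  | succ m hm ih => exact ih.succ fun x hx => exists_sub_mem_latPts hdeg hm hx
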